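/- Let S be an inverse semigroup with a zero element 0 such that Z(S)× is nonempty. Then the girth of the zero-divisor graph satisfies gr(Γ(S)) ∈ {3, 4, ∞}. -/

import Mathlib

namespace ZDG

variable {S : Type*} [Semigroup S]

/-- The natural partial order on an inverse semigroup: `a ≤ b` iff `a = e * b`
for some idempotent `e`. -/
def nle (a b : S) : Prop := ∃ e : S, e * e = e ∧ a = e * b

/-- `omg a b` is the set `ω(a,b)` of common lower bounds of `a` and `b` with respect
to the natural partial order. -/
def omg (a b : S) : Set S := {c | nle c a ∧ nle c b}

lemma omg_comm (a b : S) : omg a b = omg b a := by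
  ext c; exact and_comm

/-- `Zx z` is the set `Z(S)×` of nonzero zero-divisors of `S` (with zero element `z`). -/
def Zx (z : S) : Set S := {a | a ≠ z ∧ ∃ b : S, b ≠ z ∧ omg a b = {z}}

/-- The zero-divisor graph `Γ(S)`: vertices are the elements of `Z(S)×`, and two
distinct vertices `a`, `b` are adjacent iff `ω(a,b) = {z}`. -/
def ZDGraph (z : S) : SimpleGraph (Zx z) where
  Adj a b := (a : S) ≠ (b : S) ∧ omg (a : S) (b : S) = {z}
  symm := by
    constructor
    rintro a b ⟨h1, h2⟩
    exact ⟨fun h => h1 h.symm, (omg_comm (b : S) (a : S)).trans h2⟩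
  loopless := by constructor; rintro a ⟨h1, -⟩; exact h1 rfl

/-- The set of minimal elements of `S \ {z}` with respect to the natural partial order. -/
def MinOf (z : S) : Set S := {x | x ≠ z ∧ ∀ y : S, y ≠ z → nle y x → y = x}

/-- The annihilator of `x`: the set of `y` with `ω(x,y) = {z}`. -/
def Ann (z : S) (x : S) : Set S := {y | omg x y = {z}}

end ZDG

open ZDG

section SemigroupAux

variable {S : Type*} [Semigroup S]

lemma nle_refl' (hinv : ∀ a : S, ∃ b : S, a * b * a = a ∧ b * a * b = b) (a : S) :
    nle a a := by
  obtain ⟨b, h1, -⟩ := hinv a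
  exact ⟨a * b, by rw [← mul_assoc, h1], h1.symm⟩

lemma nle_trans' (hcomm : ∀ e f : S, e * e = e → f * f = f → e * f = f * e)
    {a b c : S} (hab : nle a b) (hbc : nle b c) : nle a c := by
  obtain ⟨e, he, hab⟩ := hab
  obtain ⟨f, hf, hbc⟩ := hbc
  refine ⟨e * f, ?_, by rw [hab, hbc, ← mul_assoc]⟩
  have hef := hcomm e f he hf
  calc e * f * (e * f) = e * (f * e) * f := by simp only [mul_assoc]
    _ = e * (e * f) * f := by rw [hef]
    _ = e * e * (f * f) := by simp only [mul_assoc]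
    _ = e * f := by rw [he, hf]

lemma nle_z' {z : S} (hz : ∀ x : S, z * x = z ∧ x * z = z) (a : S) : nle z a :=
  ⟨z, (hz z).1, ((hz a).1).symm⟩

lemma mem_omg_z {z : S} (hz : ∀ x : S, z * x = z ∧ x * z = z) (a b : S) :
    z ∈ omg a b := ⟨nle_z' hz a, nle_z' hz b⟩

lemma omg_down (hcomm : ∀ e f : S, e * e = e → f * f = f → e * f = f * e)
    {z a x c : S} (hz : ∀ x : S, z * x = z ∧ x * z = z)
    (hc : nle c a) (h : omg a x = {z}) : omg c x = {z} := by
  apply Set.Subset.antisymm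
  · rintro d ⟨hdc, hdx⟩
    have hd : d ∈ omg a x := ⟨nle_trans' hcomm hdc hc, hdx⟩
    rwa [h] at hd
  · intro d hd
    rw [Set.mem_singleton_iff] at hd
    subst hd
    exact mem_omg_z hz c x

end SemigroupAux

section GraphAux

open SimpleGraph Walk

variable {V : Type*} {G : SimpleGraph V}

lemma egirth_le_of_isCycle {a : V} {w : G.Walk a a} (hw : w.IsCycle) :
    G.egirth ≤ w.length := by
  rw [SimpleGraph.egirth]
  exact iInf_le_of_le a (iInf_le_of_le w (iInf_le _ hw))

lemma egirth_le_three_of_triangle {a b c : V}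
    (hab : G.Adj a b) (hbc : G.Adj b c) (hca : G.Adj c a) : G.egirth ≤ 3 := by
  have hw : (Walk.cons hab (Walk.cons hbc (Walk.cons hca Walk.nil))).IsCycle := by
    simp [Walk.isCycle_def, Walk.isTrail_def, Sym2.eq_iff,
      hab.ne, hbc.ne, hca.ne, hab.ne', hbc.ne', hca.ne']
  simpa using egirth_le_of_isCycle hw

lemma egirth_le_four_of_square {a b c d : V} (hac : a ≠ c) (hbd : b ≠ d)
    (hab : G.Adj a b) (hbc : G.Adj b c) (hcd : G.Adj c d) (hda : G.Adj d a) :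
    G.egirth ≤ 4 := by
  have hw : (Walk.cons hab (Walk.cons hbc (Walk.cons hcd
      (Walk.cons hda Walk.nil)))).IsCycle := by
    simp [Walk.isCycle_def, Walk.isTrail_def, Sym2.eq_iff,
      hab.ne, hbc.ne, hcd.ne, hda.ne, hab.ne', hbc.ne', hcd.ne', hda.ne',
      hac, hbd, hac.symm, hbd.symm]
  simpa using egirth_le_of_isCycle hw

lemma getVert_eq_getElem {u v : V} (p : G.Walk u v) (i : ℕ)
    (h : i < p.support.length) : p.getVert i = p.support[i] := by
  induction p generalizing i with
  | nil =>
    simp only [Walk.support_nil, List.length_cons, List.length_nil] at h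
    have : i = 0 := by omega
    subst this
    rfl
  | cons h' q ih =>
    cases i with
    | zero => rfl
    | succ n =>
      simp only [Walk.support_cons, List.length_cons] at h
      simpa [Walk.getVert_cons_succ] using ih n (by omega)

lemma cycle_getVert_inj {u : V} {w : G.Walk u u} (hw : w.IsCycle)
    {i j : ℕ} (hi : i < w.length) (hj : j < w.length)
    (hij : w.getVert i = w.getVert j) : i = j := by
  have hsl : w.support.length = w.length + 1 := w.length_support
  have ht : w.support.tail.Nodup := hw.support_nodup
  have htl : w.support.tail.length = w.length := by
    simp [List.length_tail, hsl]
  have hne : w.support.tail ≠ [] := by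
    intro hcon
    have h3 := hw.three_le_length
    rw [hcon] at htl
    simp at htl
    omega
  have hnodup : w.support.dropLast.Nodup := by
    rw [w.support_eq_cons, List.dropLast_cons_of_ne_nil hne]
    refine List.nodup_cons.2 ⟨?_, ht.sublist (List.dropLast_sublist _)⟩
    intro hmem
    have hlast : w.support.tail.getLast hne = u := by
      rw [List.getLast_tail]
      exact w.getLast_support
    have happ := List.dropLast_append_getLast hne
    rw [hlast] at happ
    rw [← happ] at ht
    have hdisj := (List.nodup_append.1 ht).2.2
    exact hdisj u hmem u (by simp) rfl
  have hdl : w.support.dropLast.length = w.length := by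
    rw [List.length_dropLast, hsl]
    omega
  have hi' : i < w.support.dropLast.length := by omega
  have hj' : j < w.support.dropLast.length := by omega
  have hval : w.support.dropLast[i] = w.support.dropLast[j] := by
    rw [List.getElem_dropLast, List.getElem_dropLast,
      ← getVert_eq_getElem, ← getVert_eq_getElem]
    exact hij
  exact hnodup.getElem_inj_iff.1 hval

end GraphAux

section KeyLemma

variable {S : Type*} [Semigroup S]

lemma key_lemma
    (hinv : ∀ a : S, ∃ b : S, a * b * a = a ∧ b * a * b = b)
    (hcomm : ∀ e f : S, e * e = e → f * f = f → e * f = f * e)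
    (z : S) (hz : ∀ x : S, z * x = z ∧ x * z = z)
    {x1 x2 x3 x4 x5 : Zx z}
    (h13 : x1 ≠ x3) (h14 : x1 ≠ x4) (h24 : x2 ≠ x4) (h25 : x2 ≠ x5) (h35 : x3 ≠ x5)
    (a12 : (ZDGraph z).Adj x1 x2) (a23 : (ZDGraph z).Adj x2 x3)
    (a34 : (ZDGraph z).Adj x3 x4) (a45 : (ZDGraph z).Adj x4 x5) :
    (ZDGraph z).egirth ≤ 4 := by
  by_cases hadj24 : (ZDGraph z).Adj x2 x4
  · exact le_trans (egirth_le_three_of_triangle a23 a34 hadj24.symm) (by norm_num)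
  · have hc24 : (x2 : S) ≠ (x4 : S) := fun h => h24 (Subtype.ext h)
    have homg : omg (x2 : S) (x4 : S) ≠ {z} := fun h => hadj24 ⟨hc24, h⟩
    obtain ⟨d, hd, hdz⟩ : ∃ d, d ∈ omg (x2 : S) (x4 : S) ∧ d ≠ z := by
      by_contra hcon
      push_neg at hcon
      exact homg (Set.eq_singleton_iff_unique_mem.2
        ⟨mem_omg_z hz _ _, fun d hd => hcon d hd⟩)
    obtain ⟨hd2, hd4⟩ := hd
    have hd3 : omg d (x3 : S) = {z} := omg_down hcomm hz hd2 a23.2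
    have hd1 : omg d (x1 : S) = {z} :=
      omg_down hcomm hz hd2 ((omg_comm (x2 : S) (x1 : S)).trans a12.2)
    have hd5 : omg d (x5 : S) = {z} := omg_down hcomm hz hd4 a45.2
    by_cases hdx2 : d = (x2 : S)
    · subst hdx2
      have a25 : (ZDGraph z).Adj x2 x5 := ⟨fun h => h25 (Subtype.ext h), hd5⟩
      exact egirth_le_four_of_square h24 h35 a23 a34 a45 a25.symm
    · by_cases hdx4 : d = (x4 : S)
      · subst hdx4
        have a41 : (ZDGraph z).Adj x4 x1 :=
          ⟨fun h => h14 (Subtype.ext h.symm), (omg_comm (x1 : S) (x4 : S)) ▸ hd1⟩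
        exact egirth_le_four_of_square h13 h24 a12 a23 a34 a41
      · have hdx1 : d ≠ (x1 : S) := by
          intro h
          rw [h] at hd1
          have hmem : (x1 : S) ∈ omg (x1 : S) (x1 : S) :=
            ⟨nle_refl' hinv _, nle_refl' hinv _⟩
          rw [hd1] at hmem
          exact x1.prop.1 hmem
        have hdx3 : d ≠ (x3 : S) := by
          intro h
          rw [h] at hd3
          have hmem : (x3 : S) ∈ omg (x3 : S) (x3 : S) :=
            ⟨nle_refl' hinv _, nle_refl' hinv _⟩
          rw [hd3] at hmem
          exact x3.prop.1 hmem
        have hdZ : d ∈ Zx z := ⟨hdz, (x3 : S), x3.prop.1, hd3⟩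
        set dv : Zx z := ⟨d, hdZ⟩ with hdv
        have a_d1 : (ZDGraph z).Adj dv x1 := ⟨hdx1, hd1⟩
        have a_d3 : (ZDGraph z).Adj dv x3 := ⟨hdx3, hd3⟩
        exact egirth_le_four_of_square
          (fun h => hdx2 (congrArg Subtype.val h)) h13 a_d1 a12 a23 a_d3.symm

end KeyLemma

/-- the girth of `Γ(S)` is `3`, `4`, or `∞`. -/
theorem stmt7 {S : Type*} [Semigroup S] [Nontrivial S]
    (hinv : ∀ a : S, ∃ b : S, a * b * a = a ∧ b * a * b = b)
    (hcomm : ∀ e f : S, e * e = e → f * f = f → e * f = f * e)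
    (z : S) (hz : ∀ x : S, z * x = z ∧ x * z = z)
    (h1 : (Zx z).Nonempty) :
    (ZDGraph z).egirth ∈ ({3, 4, ⊤} : Set ℕ∞) := by
  by_cases hac : (ZDGraph z).IsAcyclic
  · right; right
    exact SimpleGraph.egirth_eq_top.2 hac
  · obtain ⟨a, w, hw, hlen⟩ := SimpleGraph.exists_egirth_eq_length.2 hac
    by_cases h5 : 5 ≤ w.length
    · exfalso
      -- extract five consecutive distinct vertices
      have hadj : ∀ i : ℕ, i < w.length →
          (ZDGraph z).Adj (w.getVert i) (w.getVert (i + 1)) :=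
        fun i hi => w.adj_getVert_succ hi
      have hinj : ∀ i j : ℕ, i < w.length → j < w.length →
          w.getVert i = w.getVert j → i = j :=
        fun i j hi hj => cycle_getVert_inj hw hi hj
      have hle : (ZDGraph z).egirth ≤ 4 :=
        key_lemma hinv hcomm z hz
          (fun h => by have := hinj 0 2 (by omega) (by omega) h; omega)
          (fun h => by have := hinj 0 3 (by omega) (by omega) h; omega)
          (fun h => by have := hinj 1 3 (by omega) (by omega) h; omega)
          (fun h => by have := hinj 1 4 (by omega) (by omega) h; omega)
          (fun h => by have := hinj 2 4 (by omega) (by omega) h; omega)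
          (hadj 0 (by omega)) (hadj 1 (by omega)) (hadj 2 (by omega))
          (hadj 3 (by omega))
      rw [hlen] at hle
      have : w.length ≤ 4 := by exact_mod_cast hle
      omega
    · have h3 : 3 ≤ w.length := hw.three_le_length
      push_neg at h5
      interval_cases h : w.length
      · left; rw [hlen]; norm_num
      · right; left; rw [hlen]; norm_num
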